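/- arXiv:1705.09542 — 3 statements merged into one kernel-verified Lean document; each statement's English description precedes it below -/
import Mathlib

section
/- Let f_1,...,f_n be nonzero reals, h as above with s(y) = sup_x |h(x)|/|h(yx)| < ∞ for y ≠ 0. The map φ: L²(ℝ) → L²(ℝ) defined by φ(r)(x) = (|f_1|/n_1)(h(x)/h(f_1 x)) g_1(f_1 x) − ∑_{k: f_k ≠ f_1} (|f_1|/(n_1 |f_k|)) (h(x)/h((f_1/f_k)x)) r((f_1/f_k)x) is a contraction on L²(ℝ) with Lipschitz constant at most e(f,h) = (1/n_1) ∑_{k: f_k ≠ f_1} s(f_1/f_k)·√(|f_1|/|f_k|), i.e. ‖φ(u_1) − φ(u_2)‖₂ ≤ e(f,h)·‖u_1 − u_2‖₂ for all u_1, u_2 ∈ L²(ℝ). -/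
/-!
The difference `φ u₁ - φ u₂` no longer involves `g₁`: it is a finite sum of weighted dilations
`x ↦ mₖ(x) (u₂ - u₁)(cₖ x)` with `cₖ = f₁ / fₖ`. A dilation by `c` multiplies the `L²` norm by
`|c|^(-1/2)`, because Lebesgue measure scales by `|c|⁻¹`; the weight `mₖ` is bounded by
`|f₁| s(cₖ) / (n₁ |fₖ|)`; and the triangle inequality in `L²` sums these bounds to `e(f,h)`.
-/

open MeasureTheory Finset Module

section Dilation

variable {E F : Type*} [NormedAddCommGroup E] [NormedSpace ℝ E] [MeasurableSpace E] [BorelSpace E]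
  [FiniteDimensional ℝ E] (μ : Measure E) [μ.IsAddHaarMeasure] [NormedAddCommGroup F]

theorem eLpNorm_comp_smul_addHaar {r : ℝ} (hr : r ≠ 0) {w : E → F}
    (hw : AEStronglyMeasurable w μ) (p : ENNReal) :
    eLpNorm (fun x => w (r • x)) p μ =
      ENNReal.ofReal |(r ^ finrank ℝ E)⁻¹| ^ (1 / p).toReal * eLpNorm w p μ := by
  have hw' : AEStronglyMeasurable w (Measure.map (r • ·) μ) :=
    hw.mono_ac (Measure.quasiMeasurePreserving_smul μ hr).absolutelyContinuous
  rw [← Function.comp_def, ← eLpNorm_map_measure hw' (measurable_const_smul r).aemeasurable,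
    Measure.map_addHaar_smul μ hr, eLpNorm_smul_measure_of_ne_zero (by simp [hr]),
    smul_eq_mul]

theorem eLpNorm_smul_comp_smul_le [NormedSpace ℝ F] {r C : ℝ} (hr : r ≠ 0) {m : E → ℝ} {w : E → F}
    (hm : ∀ᵐ x ∂μ, ‖m x‖ ≤ C) (hw : AEStronglyMeasurable w μ) (p : ENNReal) :
    eLpNorm (fun x => m x • w (r • x)) p μ ≤
      ENNReal.ofReal C * ENNReal.ofReal |(r ^ finrank ℝ E)⁻¹| ^ (1 / p).toReal *
        eLpNorm w p μ := by
  have hpointwise : ∀ᵐ x ∂μ, ‖m x • w (r • x)‖ ≤ C * ‖w (r • x)‖ := by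
    filter_upwards [hm] with x hx
    exact (norm_smul_le _ _).trans (mul_le_mul_of_nonneg_right hx (norm_nonneg _))
  rw [mul_assoc, ← eLpNorm_comp_smul_addHaar μ hr hw]
  exact eLpNorm_le_mul_eLpNorm_of_ae_le_mul hpointwise p

theorem eLpNorm_sum_smul_comp_smul_le [NormedSpace ℝ F] {ι : Type*} (S : Finset ι) {c C : ι → ℝ}
    (hc : ∀ i ∈ S, c i ≠ 0) {m : ι → E → ℝ} (hm_meas : ∀ i ∈ S, AEStronglyMeasurable (m i) μ)
    (hm : ∀ i ∈ S, ∀ᵐ x ∂μ, ‖m i x‖ ≤ C i) {w : E → F} (hw : AEStronglyMeasurable w μ)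
    {p : ENNReal} (hp : 1 ≤ p) :
    eLpNorm (∑ i ∈ S, fun x => m i x • w (c i • x)) p μ ≤
      (∑ i ∈ S, ENNReal.ofReal (C i) * ENNReal.ofReal |(c i ^ finrank ℝ E)⁻¹| ^ (1 / p).toReal) *
        eLpNorm w p μ := by
  have hmeas : ∀ i ∈ S, AEStronglyMeasurable (fun x => m i x • w (c i • x)) μ := fun i hi =>
    (hm_meas i hi).smul
      (hw.comp_quasiMeasurePreserving (Measure.quasiMeasurePreserving_smul μ (hc i hi)))
  rw [Finset.sum_mul]
  exact (eLpNorm_sum_le hmeas hp).trans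
    (Finset.sum_le_sum fun i hi => eLpNorm_smul_comp_smul_le μ (hc i hi) (hm i hi) hw p)

end Dilation

theorem eLpNorm_two_sum_mul_comp_mul_le {ι : Type*} (S : Finset ι) {c C : ι → ℝ}
    (hc : ∀ i ∈ S, c i ≠ 0) (hC : ∀ i ∈ S, 0 ≤ C i) {m : ι → ℝ → ℝ}
    (hm_meas : ∀ i ∈ S, AEStronglyMeasurable (m i)) (hm : ∀ i ∈ S, ∀ᵐ x, |m i x| ≤ C i)
    {w : ℝ → ℝ} (hw : AEStronglyMeasurable w) :
    eLpNorm (∑ i ∈ S, fun x => m i x * w (c i * x)) 2 volume ≤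
      ENNReal.ofReal (∑ i ∈ S, C i / √|c i|) * eLpNorm w 2 volume := by
  refine (eLpNorm_sum_smul_comp_smul_le volume S hc hm_meas hm hw one_le_two).trans_eq ?_
  have hhalf : (1 / (2 : ENNReal)).toReal = 1 / 2 := by norm_num
  rw [ENNReal.ofReal_sum_of_nonneg fun i hi => div_nonneg (hC i hi) (Real.sqrt_nonneg _)]
  refine congrArg (· * _) (sum_congr rfl fun i hi => ?_)
  rw [finrank_self, pow_one, hhalf, ENNReal.ofReal_rpow_of_nonneg (abs_nonneg _) (by norm_num),
    ← ENNReal.ofReal_mul (hC i hi), ← Real.sqrt_eq_rpow, abs_inv, Real.sqrt_inv, div_eq_mul_inv]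

theorem div_mul_div_sqrt_abs_div (a b N σ : ℝ) :
    |a| / (N * |b|) * σ / √|a / b| = 1 / N * (σ * √(|a| / |b|)) := by
  rw [abs_div]
  calc |a| / (N * |b|) * σ / √(|a| / |b|) = 1 / N * σ * ((|a| / |b|) / √(|a| / |b|)) := by ring
    _ = 1 / N * (σ * √(|a| / |b|)) := by rw [Real.div_sqrt]; ring

theorem stmt1_general {n : ℕ} (hn : 0 < n) (f : Fin n → ℝ) (hf : ∀ k, f k ≠ 0)
    (h : ℝ → ℝ) (hmeas : Measurable h)
    (s : ℝ → ℝ) (hs : ∀ y, y ≠ 0 → ∀ x, |h x| / |h (y * x)| ≤ s y)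
    (n₁ : ℕ)
    (g₁ : ℝ → ℝ)
    (φ : (ℝ → ℝ) → ℝ → ℝ)
    (hφ : ∀ r : ℝ → ℝ, ∀ x : ℝ,
      φ r x = (|f ⟨0, hn⟩| / (n₁ : ℝ)) * (h x / h (f ⟨0, hn⟩ * x)) * g₁ (f ⟨0, hn⟩ * x)
        - ∑ k ∈ Finset.univ.filter (fun k => f k ≠ f ⟨0, hn⟩),
            (|f ⟨0, hn⟩| / ((n₁ : ℝ) * |f k|)) * (h x / h ((f ⟨0, hn⟩ / f k) * x))
              * r ((f ⟨0, hn⟩ / f k) * x))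
    (u₁ u₂ : ℝ → ℝ) (hu₁ : MemLp u₁ 2 (volume : Measure ℝ))
    (hu₂ : MemLp u₂ 2 (volume : Measure ℝ)) :
    eLpNorm (fun x => φ u₁ x - φ u₂ x) 2 (volume : Measure ℝ) ≤
      ENNReal.ofReal ((1 / (n₁ : ℝ)) * ∑ k ∈ Finset.univ.filter (fun k => f k ≠ f ⟨0, hn⟩),
          s (f ⟨0, hn⟩ / f k) * Real.sqrt (|f ⟨0, hn⟩| / |f k|)) *
        eLpNorm (fun x => u₁ x - u₂ x) 2 (volume : Measure ℝ) := by
  set a := f ⟨0, hn⟩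
  set S := Finset.univ.filter (fun k => f k ≠ a)
  have hc : ∀ k, a / f k ≠ 0 := fun k => div_ne_zero (hf _) (hf k)
  have hC : ∀ k ∈ S, 0 ≤ |a| / ((n₁ : ℝ) * |f k|) * s (a / f k) := fun k _ =>
    mul_nonneg (by positivity) ((by positivity : (0 : ℝ) ≤ _).trans (hs _ (hc k) 0))
  have hdiff : (fun x => φ u₁ x - φ u₂ x) = ∑ k ∈ S, fun x =>
      |a| / ((n₁ : ℝ) * |f k|) * (h x / h (a / f k * x)) * (u₂ - u₁) (a / f k * x) := by
    funext x
    simp only [Finset.sum_apply, hφ, Pi.sub_apply, mul_sub, Finset.sum_sub_distrib]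
    ring
  have hweight : ∀ k ∈ S, ∀ᵐ x, |(|a| / ((n₁ : ℝ) * |f k|) * (h x / h (a / f k * x)))| ≤
      |a| / ((n₁ : ℝ) * |f k|) * s (a / f k) := by
    refine fun k _ => Filter.Eventually.of_forall fun x => ?_
    rw [abs_mul, abs_of_nonneg (by positivity), abs_div]
    exact mul_le_mul_of_nonneg_left (hs _ (hc k) x) (by positivity)
  have hweight_meas : ∀ k ∈ S,
      AEStronglyMeasurable fun x => |a| / ((n₁ : ℝ) * |f k|) * (h x / h (a / f k * x)) :=
    fun k _ => (measurable_const.mul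
      (hmeas.div (hmeas.comp (measurable_const_mul _)))).aestronglyMeasurable
  calc eLpNorm (fun x => φ u₁ x - φ u₂ x) 2 volume
      ≤ ENNReal.ofReal (∑ k ∈ S, |a| / ((n₁ : ℝ) * |f k|) * s (a / f k) / √|a / f k|) *
          eLpNorm (u₂ - u₁) 2 volume :=
        hdiff ▸ eLpNorm_two_sum_mul_comp_mul_le S (fun k _ => hc k) hC hweight_meas hweight
          (hu₂.aestronglyMeasurable.sub hu₁.aestronglyMeasurable)
    _ = _ := by
        rw [eLpNorm_sub_comm, mul_sum, sum_congr rfl fun k _ => div_mul_div_sqrt_abs_div _ _ _ _]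
        rfl

/-- The operator `φ` from the Banach fixed-point argument is a contraction on `L²(ℝ)`
with Lipschitz constant at most `e(f,h)`. -/
theorem stmt1 {n : ℕ} (hn : 0 < n) (f : Fin n → ℝ) (hf : ∀ k, f k ≠ 0)
    (h : ℝ → ℝ) (hmeas : Measurable h) (hne : ∀ x, h x ≠ 0)
    (s : ℝ → ℝ) (hs : ∀ y, y ≠ 0 → ∀ x, |h x| / |h (y * x)| ≤ s y)
    (n₁ : ℕ) (hn₁ : n₁ = (Finset.univ.filter (fun k => f k = f ⟨0, hn⟩)).card)
    (g₁ : ℝ → ℝ) (hg₁ : MemLp g₁ 2 (volume : Measure ℝ))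
    (φ : (ℝ → ℝ) → ℝ → ℝ)
    (hφ : ∀ r : ℝ → ℝ, ∀ x : ℝ,
      φ r x = (|f ⟨0, hn⟩| / (n₁ : ℝ)) * (h x / h (f ⟨0, hn⟩ * x)) * g₁ (f ⟨0, hn⟩ * x)
        - ∑ k ∈ Finset.univ.filter (fun k => f k ≠ f ⟨0, hn⟩),
            (|f ⟨0, hn⟩| / ((n₁ : ℝ) * |f k|)) * (h x / h ((f ⟨0, hn⟩ / f k) * x))
              * r ((f ⟨0, hn⟩ / f k) * x))
    (u₁ u₂ : ℝ → ℝ) (hu₁ : MemLp u₁ 2 (volume : Measure ℝ))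
    (hu₂ : MemLp u₂ 2 (volume : Measure ℝ)) :
    eLpNorm (fun x => φ u₁ x - φ u₂ x) 2 (volume : Measure ℝ) ≤
      ENNReal.ofReal ((1 / (n₁ : ℝ)) * ∑ k ∈ Finset.univ.filter (fun k => f k ≠ f ⟨0, hn⟩),
          s (f ⟨0, hn⟩ / f k) * Real.sqrt (|f ⟨0, hn⟩| / |f k|)) *
        eLpNorm (fun x => u₁ x - u₂ x) 2 (volume : Measure ℝ) :=
  stmt1_general hn f hf h hmeas s hs n₁ g₁ φ hφ u₁ u₂ hu₁ hu₂
end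

section
/- For δ > 1/2, δ ≠ 5/2 and b ∈ (0,1), it holds that ∫_ℝ min{1, b|x|}⁴ (1+x²)^{−δ} dx = O(b^{4 ∧ (2δ−1)}) as b → 0⁺; for δ = 5/2, ∫_ℝ min{1, b|x|}⁴ (1+x²)^{−δ} dx = O(−b⁴ log b) as b → 0⁺. -/
/-!
The integrand is even, so it suffices to integrate over `t > 0`, split at `1` and `1/b`.
On `(0, 1]` the integrand is at most `b⁴`; on `(1, 1/b]` it is at most `b⁴ t^(4 - 2δ)`, whose
integral is `(b^(2δ-1) - b⁴) / (5 - 2δ)`, or `-b⁴ log b` when `δ = 5/2`; beyond `1/b` it is at most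
`t^(-2δ)`, which contributes `b^(2δ-1) / (2δ - 1)`.
-/

open MeasureTheory Set Real

section RpowIntegrals

variable {b : ℝ}

lemma integral_Ioc_one_inv_rpow (hb : 0 < b) (hb1 : b ≤ 1) {r : ℝ} (hr : r ≠ -1) :
    ∫ t in Ioc 1 b⁻¹, t ^ r = (b ^ (-(r + 1)) - 1) / (r + 1) := by
  rw [← intervalIntegral.integral_of_le ((one_le_inv₀ hb).mpr hb1),
    integral_rpow (Or.inr ⟨hr, notMem_uIcc_of_lt one_pos (inv_pos.mpr hb)⟩),
    one_rpow, inv_rpow hb.le, ← rpow_neg hb.le]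

lemma integral_Ioc_one_inv_rpow_neg_one (hb : 0 < b) (hb1 : b ≤ 1) :
    ∫ t in Ioc 1 b⁻¹, t ^ (-1 : ℝ) = -log b := by
  simp_rw [← intervalIntegral.integral_of_le ((one_le_inv₀ hb).mpr hb1), rpow_neg_one]
  rw [integral_inv (notMem_uIcc_of_lt one_pos (inv_pos.mpr hb)), div_one, log_inv]

lemma integral_Ioi_inv_rpow_neg {s : ℝ} (hb : 0 < b) (hs : 1 < s) :
    ∫ t in Ioi b⁻¹, t ^ (-s) = b ^ (s - 1) / (s - 1) := by
  rw [integral_Ioi_rpow_of_lt (by linarith) (inv_pos.mpr hb), inv_rpow hb.le, ← rpow_neg hb.le,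
    show -s + 1 = -(s - 1) by ring, neg_neg, neg_div_neg_eq]

end RpowIntegrals

lemma one_add_sq_rpow_neg_le_one {δ : ℝ} (hδ : 0 ≤ δ) (t : ℝ) : (1 + t ^ 2) ^ (-δ) ≤ 1 :=
  rpow_le_one_of_one_le_of_nonpos (by nlinarith [sq_nonneg t]) (by linarith)

lemma one_add_sq_rpow_neg_le_rpow {δ t : ℝ} (hδ : 0 ≤ δ) (ht : 0 < t) :
    (1 + t ^ 2) ^ (-δ) ≤ t ^ (-(2 * δ)) := by
  calc (1 + t ^ 2) ^ (-δ) ≤ (t ^ 2) ^ (-δ) :=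
        rpow_le_rpow_of_nonpos (by positivity) (by linarith) (by linarith)
    _ = t ^ (-(2 * δ)) := by
        rw [← rpow_natCast, ← rpow_mul ht.le]
        norm_num

lemma setIntegral_Ioi_eq_add_add {f : ℝ → ℝ} {a b c : ℝ} (hab : a ≤ b) (hbc : b ≤ c)
    (hf : IntegrableOn f (Ioi a)) :
    ∫ t in Ioi a, f t = (∫ t in Ioc a b, f t) + (∫ t in Ioc b c, f t) + ∫ t in Ioi c, f t := by
  rw [← Ioc_union_Ioi_eq_Ioi (hab.trans hbc)] at hf ⊢
  rw [setIntegral_union (Ioc_disjoint_Ioi le_rfl) measurableSet_Ioi hf.left_of_union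
    hf.right_of_union]
  have hac := hf.left_of_union
  rw [← Ioc_union_Ioc_eq_Ioc hab hbc] at hac ⊢
  rw [setIntegral_union (Ioc_disjoint_Ioc_of_le le_rfl) measurableSet_Ioc hac.left_of_union
    hac.right_of_union]

noncomputable def cutoffWeight (b δ t : ℝ) : ℝ := (min 1 (b * t)) ^ 4 * (1 + t ^ 2) ^ (-δ)

namespace cutoffWeight

variable {b δ t : ℝ}

lemma continuous (b δ : ℝ) : Continuous (cutoffWeight b δ) := by
  unfold cutoffWeight
  exact ((continuous_const.min (continuous_const.mul continuous_id)).pow 4).mul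
    ((continuous_const.add (continuous_pow 2)).rpow_const fun t =>
      Or.inl (by positivity : (0 : ℝ) < 1 + t ^ 2).ne')

lemma le_mul_pow (hb : 0 ≤ b) (ht : 0 ≤ t) :
    cutoffWeight b δ t ≤ (b * t) ^ 4 * (1 + t ^ 2) ^ (-δ) := by
  unfold cutoffWeight
  gcongr
  exact min_le_right _ _

lemma le_one_add_sq_rpow (hb : 0 ≤ b) (ht : 0 ≤ t) :
    cutoffWeight b δ t ≤ (1 + t ^ 2) ^ (-δ) := by
  unfold cutoffWeight
  have h : (min 1 (b * t)) ^ 4 ≤ 1 :=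
    pow_le_one₀ (le_min zero_le_one (by positivity)) (min_le_left _ _)
  calc _ ≤ 1 * (1 + t ^ 2) ^ (-δ) := by gcongr
    _ = _ := one_mul _

lemma integrableOn_Ioi (hb : 0 ≤ b) (hδ : 1 / 2 < δ) :
    IntegrableOn (cutoffWeight b δ) (Ioi 0) := by
  have hg : Integrable fun t : ℝ => (1 + ‖t‖ ^ 2) ^ (-(2 * δ) / 2) :=
    integrable_rpow_neg_one_add_norm_sq (by simp; linarith)
  refine hg.integrableOn.mono' (continuous b δ).aestronglyMeasurable.restrict ?_
  filter_upwards [ae_restrict_mem measurableSet_Ioi] with t (ht : 0 < t)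
  rw [norm_eq_abs, abs_of_nonneg (by unfold cutoffWeight; positivity), norm_eq_abs, sq_abs,
    neg_div, mul_div_cancel_left₀ _ two_ne_zero]
  exact le_one_add_sq_rpow hb ht.le

lemma setIntegral_Ioc_zero_one_le (hb : 0 ≤ b) (hδ : 1 / 2 < δ) :
    ∫ t in Ioc 0 1, cutoffWeight b δ t ≤ b ^ 4 := by
  calc ∫ t in Ioc 0 1, cutoffWeight b δ t ≤ ∫ _ in Ioc (0 : ℝ) 1, b ^ 4 := by
        refine setIntegral_mono_on ((integrableOn_Ioi hb hδ).mono_set Ioc_subset_Ioi_self)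
          (by simp) measurableSet_Ioc fun t ⟨ht₀, ht₁⟩ => ?_
        calc cutoffWeight b δ t ≤ (b * t) ^ 4 * 1 :=
              (le_mul_pow hb ht₀.le).trans
                (by gcongr; exact one_add_sq_rpow_neg_le_one (by linarith) t)
          _ ≤ b ^ 4 := by
              rw [mul_one, mul_pow]
              exact mul_le_of_le_one_right (by positivity) (pow_le_one₀ ht₀.le ht₁)
    _ = b ^ 4 := by simp

lemma setIntegral_Ioc_one_le (hb : 0 ≤ b) (hδ : 1 / 2 < δ) (c : ℝ) :
    ∫ t in Ioc 1 c, cutoffWeight b δ t ≤ b ^ 4 * ∫ t in Ioc 1 c, t ^ (4 - 2 * δ) := by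
  rw [← integral_const_mul]
  refine setIntegral_mono_on ((integrableOn_Ioi hb hδ).mono_set (Ioc_subset_Ioi_self.trans
      (Ioi_subset_Ioi zero_le_one))) ?_ measurableSet_Ioc fun t ⟨ht₁, _⟩ => ?_
  · refine (ContinuousOn.integrableOn_Icc ?_).mono_set Ioc_subset_Icc_self
    exact continuousOn_const.mul
      (continuousOn_id.rpow_const fun t ht => Or.inl (one_pos.trans_le ht.1).ne')
  · have ht : 0 < t := one_pos.trans ht₁
    calc cutoffWeight b δ t ≤ (b * t) ^ 4 * t ^ (-(2 * δ)) :=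
          (le_mul_pow hb ht.le).trans
            (by gcongr; exact one_add_sq_rpow_neg_le_rpow (by linarith) ht)
      _ = b ^ 4 * t ^ (4 - 2 * δ) := by
          rw [mul_pow, mul_assoc, ← rpow_natCast t 4, ← rpow_add ht]
          norm_num [sub_eq_add_neg]

lemma setIntegral_Ioi_inv_le (hb : 0 < b) (hδ : 1 / 2 < δ) :
    ∫ t in Ioi b⁻¹, cutoffWeight b δ t ≤ b ^ (2 * δ - 1) / (2 * δ - 1) := by
  have hb' : 0 < b⁻¹ := inv_pos.mpr hb
  rw [← integral_Ioi_inv_rpow_neg hb (by linarith : 1 < 2 * δ)]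
  refine setIntegral_mono_on ((integrableOn_Ioi hb.le hδ).mono_set (Ioi_subset_Ioi hb'.le))
    (integrableOn_Ioi_rpow_of_lt (by linarith) hb') measurableSet_Ioi fun t (ht : b⁻¹ < t) => ?_
  exact (le_one_add_sq_rpow hb.le (hb'.trans ht).le).trans
    (one_add_sq_rpow_neg_le_rpow (by linarith) (hb'.trans ht))

end cutoffWeight

lemma integral_min_one_mul_abs_pow_le {b δ : ℝ} (hb : 0 < b) (hb1 : b ≤ 1) (hδ : 1 / 2 < δ) :
    ∫ x : ℝ, (min 1 (b * |x|)) ^ 4 * (1 + x ^ 2) ^ (-δ) ≤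
      2 * (b ^ 4 + b ^ 4 * (∫ t in Ioc 1 b⁻¹, t ^ (4 - 2 * δ)) +
        b ^ (2 * δ - 1) / (2 * δ - 1)) := by
  have heven : (fun x : ℝ => (min 1 (b * |x|)) ^ 4 * (1 + x ^ 2) ^ (-δ)) =
      fun x => cutoffWeight b δ |x| := by
    ext x; rw [cutoffWeight, sq_abs]
  rw [heven, integral_comp_abs, setIntegral_Ioi_eq_add_add zero_le_one
    ((one_le_inv₀ hb).mpr hb1) (cutoffWeight.integrableOn_Ioi hb.le hδ)]
  gcongr
  · exact cutoffWeight.setIntegral_Ioc_zero_one_le hb.le hδ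
  · exact cutoffWeight.setIntegral_Ioc_one_le hb.le hδ _
  · exact cutoffWeight.setIntegral_Ioi_inv_le hb hδ

lemma pow_four_mul_integral_Ioc_rpow_le {b δ : ℝ} (hb : 0 < b) (hb1 : b < 1) (hδ : δ ≠ 5 / 2) :
    b ^ 4 * ∫ t in Ioc 1 b⁻¹, t ^ (4 - 2 * δ) ≤ b ^ min (4 : ℝ) (2 * δ - 1) / |5 - 2 * δ| := by
  have h5 : (5 : ℝ) - 2 * δ ≠ 0 := by contrapose! hδ; linarith
  have hmin_le (r : ℝ) (hr : min 4 (2 * δ - 1) ≤ r) : b ^ r ≤ b ^ min (4 : ℝ) (2 * δ - 1) :=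
    rpow_le_rpow_of_exponent_ge hb hb1.le hr
  have hexp : b ^ 4 * b ^ (-(4 - 2 * δ + 1)) = b ^ (2 * δ - 1) := by
    rw [← rpow_natCast, ← rpow_add hb]; norm_num; ring_nf
  rw [integral_Ioc_one_inv_rpow hb hb1.le (by contrapose! h5; linarith), mul_div_assoc', mul_sub,
    hexp, mul_one, show 4 - 2 * δ + 1 = 5 - 2 * δ by ring]
  have hdiff : |b ^ (2 * δ - 1) - b ^ 4| ≤ b ^ min (4 : ℝ) (2 * δ - 1) := by
    have h4 := hmin_le 4 (min_le_left _ _)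
    have h2 := hmin_le _ (min_le_right _ _)
    rw [rpow_ofNat] at h4
    rw [abs_sub_le_iff]
    constructor <;> linarith [rpow_nonneg hb.le (2 * δ - 1), pow_pos hb 4]
  calc (b ^ (2 * δ - 1) - b ^ 4) / (5 - 2 * δ) ≤ |(b ^ (2 * δ - 1) - b ^ 4) / (5 - 2 * δ)| :=
        le_abs_self _
    _ ≤ _ := by rw [abs_div]; gcongr

/-- Asymptotics of `∫ min{1, b|x|}⁴ (1+x²)^{−δ} dx` as `b → 0⁺`:
`O(b^{4 ∧ (2δ−1)})` for `δ ≠ 5/2` and `O(−b⁴ log b)` for `δ = 5/2`. -/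
theorem stmt8 (δ : ℝ) (hδ : 1 / 2 < δ) :
    ((δ ≠ 5 / 2) → ∃ C > (0 : ℝ), ∃ b₀ ∈ Set.Ioo (0 : ℝ) 1, ∀ b ∈ Set.Ioo (0 : ℝ) b₀,
      (∫ x : ℝ, (min 1 (b * |x|)) ^ 4 * (1 + x ^ 2) ^ (-δ)) ≤
        C * b ^ (min (4 : ℝ) (2 * δ - 1))) ∧
    ((δ = 5 / 2) → ∃ C > (0 : ℝ), ∃ b₀ ∈ Set.Ioo (0 : ℝ) 1, ∀ b ∈ Set.Ioo (0 : ℝ) b₀,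
      (∫ x : ℝ, (min 1 (b * |x|)) ^ 4 * (1 + x ^ 2) ^ (-δ)) ≤
        C * (-(b ^ 4 * Real.log b))) := by
  constructor
  · intro hne
    have hδ₁ : 0 < 2 * δ - 1 := by linarith
    refine ⟨2 * (1 + 1 / |5 - 2 * δ| + 1 / (2 * δ - 1)), by positivity, 1 / 2,
      ⟨by norm_num, by norm_num⟩, fun b ⟨hb, hb2⟩ => ?_⟩
    have hb1 : b < 1 := by linarith
    have h4 : b ^ 4 ≤ b ^ min (4 : ℝ) (2 * δ - 1) := by
      rw [← rpow_ofNat]; exact rpow_le_rpow_of_exponent_ge hb hb1.le (min_le_left _ _)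
    have h2 : b ^ (2 * δ - 1) ≤ b ^ min (4 : ℝ) (2 * δ - 1) :=
      rpow_le_rpow_of_exponent_ge hb hb1.le (min_le_right _ _)
    calc _ ≤ _ := integral_min_one_mul_abs_pow_le hb hb1.le hδ
      _ ≤ 2 * (b ^ min (4 : ℝ) (2 * δ - 1) + b ^ min (4 : ℝ) (2 * δ - 1) / |5 - 2 * δ| +
            b ^ min (4 : ℝ) (2 * δ - 1) / (2 * δ - 1)) := by
          gcongr
          exact pow_four_mul_integral_Ioc_rpow_le hb hb1 hne
      _ = _ := by ring
  · rintro rfl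
    have he : exp (-1) < 1 := exp_lt_one_iff.mpr (by norm_num)
    refine ⟨5, by norm_num, exp (-1), ⟨exp_pos _, he⟩, fun b ⟨hb, hbe⟩ => ?_⟩
    have hlog : 1 ≤ -log b := by
      have := (log_lt_log_iff hb (exp_pos _)).mpr hbe; rw [log_exp] at this; linarith
    have h := integral_min_one_mul_abs_pow_le hb (hbe.trans he).le hδ
    rw [show (4 : ℝ) - 2 * (5 / 2) = -1 by norm_num, show (2 : ℝ) * (5 / 2) - 1 = 4 by norm_num,
      integral_Ioc_one_inv_rpow_neg_one hb (hbe.trans he).le, rpow_ofNat] at h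
    linarith [mul_le_mul_of_nonneg_left hlog (pow_pos hb 4).le, pow_pos hb 4]
end

section
/- Let (ψ_j) be an orthonormal basis of a closed subspace U of L²(ℝ) and let T: ℓ² → U map x = (x_j) to ∑_j x_j η_j, where η_j(x) = ∑_{k=1}^n (1/|f_k|)(h(x)/h((f₁/f_k)x)) ψ_j((f₁/f_k)x). Assume |f₁| ≥ max_{k: f_k≠f₁}|f_k|, each η_j ∈ U, and e(f,h) = (1/n₁)∑_{k: f_k≠f₁} s(f₁/f_k)√(|f₁|/|f_k|) < 1. Then ‖η_j‖₂ ≥ (n₁/|f₁|)(1 − e(f,h)) > 0 for every j; in particular each η_j is nonzero. -/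
open MeasureTheory Finset
open scoped ENNReal

/-!
The summands of `η_j` with `f_k = f₁` all equal `ψ_j / |f₁|`, giving the main part
`(n₁/|f₁|) ψ_j` of norm `n₁/|f₁|`. Every other summand is the dilate `x ↦ ψ_j((f₁/f_k) x)`
times a weight bounded by `s(f₁/f_k)/|f_k|`; dilation by `c` scales the `L²` norm by
`|c|^(-1/2)`, so that summand has norm at most `s(f₁/f_k) √(|f₁|/|f_k|) / |f₁|`. Summing,
the remainder has norm at most `(n₁/|f₁|) e`, and the reverse triangle inequality concludes.
-/

section ReverseTriangle

variable {α E : Type*} [MeasurableSpace α] {μ : Measure α} [NormedAddCommGroup E]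

theorem eLpNorm_sub_eLpNorm_le_eLpNorm_add {f g : α → E} (hf : AEStronglyMeasurable f μ)
    (hg : AEStronglyMeasurable g μ) {p : ℝ≥0∞} (hp : 1 ≤ p) :
    eLpNorm f p μ - eLpNorm g p μ ≤ eLpNorm (f + g) p μ := by
  rw [tsub_le_iff_right]
  simpa using eLpNorm_sub_le (hf.add hg) hg hp

end ReverseTriangle

section Dilation

variable {E : Type*} [NormedAddCommGroup E]

theorem eLpNorm_comp_mul_left (g : ℝ → E) {c : ℝ} (hc : c ≠ 0) (p : ℝ≥0∞) :
    eLpNorm (fun x => g (c * x)) p volume =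
      ENNReal.ofReal |c⁻¹| ^ (1 / p).toReal * eLpNorm g p volume := by
  have := (measurableEmbedding_mulLeft₀ hc).eLpNorm_map_measure (g := g) (p := p) (μ := volume)
  rw [Real.map_volume_mul_left hc,
    eLpNorm_smul_measure_of_ne_zero (by simpa using hc), smul_eq_mul] at this
  exact this.symm

theorem eLpNorm_two_comp_mul_left (g : ℝ → E) {c : ℝ} (hc : c ≠ 0) :
    eLpNorm (fun x => g (c * x)) 2 volume =
      ENNReal.ofReal (Real.sqrt |c|)⁻¹ * eLpNorm g 2 volume := by
  rw [eLpNorm_comp_mul_left g hc, ENNReal.ofReal_rpow_of_nonneg (abs_nonneg _) (by norm_num),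
    abs_inv, Real.inv_rpow (abs_nonneg _)]
  norm_num [Real.sqrt_eq_rpow]

theorem eLpNorm_two_smul_comp_mul_left_le [NormedSpace ℝ E] {w : ℝ → ℝ} {C : ℝ}
    (hw : ∀ x, |w x| ≤ C) (g : ℝ → E) {c : ℝ} (hc : c ≠ 0) :
    eLpNorm (fun x => w x • g (c * x)) 2 volume ≤
      ENNReal.ofReal (C / Real.sqrt |c|) * eLpNorm g 2 volume := by
  have hC : 0 ≤ C := (abs_nonneg _).trans (hw 0)
  calc eLpNorm (fun x => w x • g (c * x)) 2 volume
      ≤ ENNReal.ofReal C * eLpNorm (fun x => g (c * x)) 2 volume :=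
        eLpNorm_le_mul_eLpNorm_of_ae_le_mul (ae_of_all _ fun x => by
          rw [norm_smul, Real.norm_eq_abs]
          exact mul_le_mul_of_nonneg_right (hw x) (norm_nonneg _)) 2
    _ = ENNReal.ofReal (C / Real.sqrt |c|) * eLpNorm g 2 volume := by
        rw [eLpNorm_two_comp_mul_left g hc, ← mul_assoc, ← ENNReal.ofReal_mul hC, div_eq_mul_inv]

end Dilation

section WeightedDilation

noncomputable def weightedDilation (h ψ : ℝ → ℝ) (a b x : ℝ) : ℝ :=
  1 / |b| * (h x / h (a / b * x)) * ψ (a / b * x)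

variable {h ψ : ℝ → ℝ} {a : ℝ}

theorem weightedDilation_self (hh : ∀ x, h x ≠ 0) (ha : a ≠ 0) :
    weightedDilation h ψ a a = |a|⁻¹ • ψ := by
  funext x
  simp [weightedDilation, div_self ha, div_self (hh x)]

theorem aestronglyMeasurable_weightedDilation (hh : Measurable h)
    (hψ : AEStronglyMeasurable ψ volume) {b : ℝ} (ha : a ≠ 0) (hb : b ≠ 0) :
    AEStronglyMeasurable (weightedDilation h ψ a b) volume := by
  have hc : a / b ≠ 0 := div_ne_zero ha hb
  have hψc : AEStronglyMeasurable (fun x => ψ (a / b * x)) volume :=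
    hψ.comp_quasiMeasurePreserving ⟨measurable_const_mul _, by
      rw [Real.map_volume_mul_left hc]; exact Measure.smul_absolutelyContinuous⟩
  exact (measurable_const.mul (hh.div (hh.comp (measurable_const_mul _))))
    |>.aestronglyMeasurable.mul hψc

theorem eLpNorm_weightedDilation_le {b S : ℝ} (ha : a ≠ 0) (hb : b ≠ 0)
    (hS : ∀ x, |h x| / |h (a / b * x)| ≤ S) :
    eLpNorm (weightedDilation h ψ a b) 2 volume ≤
      ENNReal.ofReal (S * Real.sqrt (|a| / |b|) / |a|) * eLpNorm ψ 2 volume := by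
  have hw : ∀ x, |1 / |b| * (h x / h (a / b * x))| ≤ S / |b| := fun x => by
    rw [abs_mul, abs_div, abs_div, abs_one, abs_abs, one_div_mul_eq_div]
    exact div_le_div_of_nonneg_right (hS x) (abs_nonneg b)
  have hconst : S / |b| / Real.sqrt |a / b| = S * Real.sqrt (|a| / |b|) / |a| := by
    have ha' : 0 < |a| := abs_pos.2 ha
    have hb' : 0 < |b| := abs_pos.2 hb
    have hsq := Real.sq_sqrt (div_pos ha' hb').le
    rw [abs_div]
    field_simp
    rw [hsq]
    field_simp
  rw [← hconst]
  exact eLpNorm_two_smul_comp_mul_left_le hw ψ (div_ne_zero ha hb)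

theorem sum_weightedDilation_eq {ι : Type*} [Fintype ι] (hh : ∀ x, h x ≠ 0) (f : ι → ℝ)
    (ha : a ≠ 0) :
    ∑ k, weightedDilation h ψ a (f k) =
      ((#{k | f k = a} : ℝ) / |a|) • ψ + ∑ k ∈ {k | f k ≠ a}, weightedDilation h ψ a (f k) := by
  have hmain : ∑ k ∈ {k | f k = a}, weightedDilation h ψ a (f k) =
      ((#{k | f k = a} : ℝ) / |a|) • ψ := by
    rw [sum_congr rfl fun k hk => by rw [(mem_filter.1 hk).2, weightedDilation_self hh ha],
      sum_const, ← Nat.cast_smul_eq_nsmul ℝ, smul_smul, div_eq_mul_inv]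
  rw [← hmain, sum_filter_add_sum_filter_not]

theorem eLpNorm_sum_weightedDilation_le {ι : Type*} (hh : Measurable h)
    (hψ : AEStronglyMeasurable ψ volume) (ha : a ≠ 0) (s : Finset ι) {f B : ι → ℝ}
    (hf : ∀ k ∈ s, f k ≠ 0) (hB : ∀ k ∈ s, ∀ x, |h x| / |h (a / f k * x)| ≤ B k) :
    eLpNorm (∑ k ∈ s, weightedDilation h ψ a (f k)) 2 volume ≤
      ENNReal.ofReal ((∑ k ∈ s, B k * Real.sqrt (|a| / |f k|)) / |a|) * eLpNorm ψ 2 volume := by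
  have hB₀ : ∀ k ∈ s, 0 ≤ B k * Real.sqrt (|a| / |f k|) / |a| := fun k hk =>
    div_nonneg (mul_nonneg ((div_nonneg (abs_nonneg _) (abs_nonneg _)).trans (hB k hk 0))
      (Real.sqrt_nonneg _)) (abs_nonneg _)
  calc eLpNorm (∑ k ∈ s, weightedDilation h ψ a (f k)) 2 volume
      ≤ ∑ k ∈ s, eLpNorm (weightedDilation h ψ a (f k)) 2 volume :=
        eLpNorm_sum_le (fun k hk => aestronglyMeasurable_weightedDilation hh hψ ha (hf k hk))
          one_le_two
    _ ≤ ∑ k ∈ s, ENNReal.ofReal (B k * Real.sqrt (|a| / |f k|) / |a|) * eLpNorm ψ 2 volume :=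
        sum_le_sum fun k hk => eLpNorm_weightedDilation_le ha (hf k hk) (hB k hk)
    _ = _ := by rw [← sum_mul, ← ENNReal.ofReal_sum_of_nonneg hB₀, sum_div]

end WeightedDilation

theorem stmt11_general {n : ℕ} (hn : 0 < n) (f : Fin n → ℝ) (hf : ∀ k, f k ≠ 0)
    (h : ℝ → ℝ) (hmeas : Measurable h) (hne : ∀ x, h x ≠ 0)
    (s : ℝ → ℝ) (hs : ∀ y : ℝ, y ≠ 0 → ∀ x : ℝ, |h x| / |h (y * x)| ≤ s y)
    (n₁ : ℕ) (hn₁ : n₁ = (Finset.univ.filter (fun k => f k = f ⟨0, hn⟩)).card)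
    (e : ℝ)
    (he_def : e = (1 / (n₁ : ℝ)) * ∑ k ∈ Finset.univ.filter (fun k => f k ≠ f ⟨0, hn⟩),
        s (f ⟨0, hn⟩ / f k) * Real.sqrt (|f ⟨0, hn⟩| / |f k|))
    (ψ : ℕ → ℝ → ℝ) (hψm : ∀ j, MemLp (ψ j) 2 (volume : Measure ℝ))
    (hψ : ∀ j, eLpNorm (ψ j) 2 (volume : Measure ℝ) = 1)
    (η : ℕ → ℝ → ℝ)
    (hη : ∀ j : ℕ, ∀ x : ℝ, η j x = ∑ k : Fin n,
      (1 / |f k|) * (h x / h ((f ⟨0, hn⟩ / f k) * x)) * ψ j ((f ⟨0, hn⟩ / f k) * x)) :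
    ∀ j : ℕ, ENNReal.ofReal (((n₁ : ℝ) / |f ⟨0, hn⟩|) * (1 - e)) ≤
      eLpNorm (η j) 2 (volume : Measure ℝ) := by
  intro j
  set f₀ := f ⟨0, hn⟩
  set a : ℝ := n₁ / |f₀| with ha
  set rest := ∑ k ∈ {k | f k ≠ f₀}, weightedDilation h (ψ j) f₀ (f k)
  have hf₀ : f₀ ≠ 0 := hf _
  have hn₁pos : (0 : ℝ) < n₁ := by
    rw [hn₁]
    exact Nat.cast_pos.2 (card_pos.2 ⟨⟨0, hn⟩, by simp [f₀]⟩)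
  have he₀ : 0 ≤ e := by
    rw [he_def]
    refine mul_nonneg (by positivity) (sum_nonneg fun k _ => mul_nonneg ?_ (Real.sqrt_nonneg _))
    exact (div_nonneg (abs_nonneg _) (abs_nonneg _)).trans (hs _ (div_ne_zero hf₀ (hf k)) 0)
  have hsplit : η j = a • ψ j + rest := by
    have hsum := sum_weightedDilation_eq (ψ := ψ j) hne f hf₀
    rw [← hn₁] at hsum
    refine Eq.trans (funext fun x => ?_) hsum
    rw [hη, Finset.sum_apply]
    rfl
  have hrest : eLpNorm rest 2 volume ≤ ENNReal.ofReal (a * e) := by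
    have := eLpNorm_sum_weightedDilation_le hmeas (hψm j).1 hf₀ {k | f k ≠ f₀}
      (fun k _ => hf k) (fun k _ => hs _ (div_ne_zero hf₀ (hf k)))
    refine this.trans_eq ?_
    rw [hψ j, mul_one, ha, he_def]
    field_simp
  have hmain : eLpNorm (a • ψ j) 2 volume = ENNReal.ofReal a := by
    rw [eLpNorm_const_smul, hψ j, mul_one, Real.enorm_eq_ofReal (by positivity)]
  calc ENNReal.ofReal (a * (1 - e)) = ENNReal.ofReal a - ENNReal.ofReal (a * e) := by
        rw [mul_one_sub, ENNReal.ofReal_sub _ (by positivity)]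
    _ ≤ eLpNorm (a • ψ j) 2 volume - eLpNorm rest 2 volume := by
        rw [hmain]
        exact tsub_le_tsub_left hrest _
    _ ≤ eLpNorm (η j) 2 volume := hsplit ▸ eLpNorm_sub_eLpNorm_le_eLpNorm_add
        ((hψm j).1.const_smul a) (aestronglyMeasurable_sum _ fun k _ =>
          aestronglyMeasurable_weightedDilation hmeas (hψm j).1 hf₀ (hf k)) one_le_two

/-- The functions `η_j` built from an `L²`-normalized system `ψ_j` are bounded below in
`L²`-norm by `(n₁/|f₁|)(1 − e(f,h)) > 0`; in particular they are nonzero. -/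
theorem stmt11 {n : ℕ} (hn : 0 < n) (f : Fin n → ℝ) (hf : ∀ k, f k ≠ 0)
    (hmax : ∀ k, f k ≠ f ⟨0, hn⟩ → |f k| ≤ |f ⟨0, hn⟩|)
    (h : ℝ → ℝ) (hmeas : Measurable h) (hne : ∀ x, h x ≠ 0)
    (s : ℝ → ℝ) (hs : ∀ y : ℝ, y ≠ 0 → ∀ x : ℝ, |h x| / |h (y * x)| ≤ s y)
    (n₁ : ℕ) (hn₁ : n₁ = (Finset.univ.filter (fun k => f k = f ⟨0, hn⟩)).card)
    (e : ℝ)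
    (he_def : e = (1 / (n₁ : ℝ)) * ∑ k ∈ Finset.univ.filter (fun k => f k ≠ f ⟨0, hn⟩),
        s (f ⟨0, hn⟩ / f k) * Real.sqrt (|f ⟨0, hn⟩| / |f k|))
    (he : e < 1)
    (ψ : ℕ → ℝ → ℝ) (hψm : ∀ j, MemLp (ψ j) 2 (volume : Measure ℝ))
    (hψ : ∀ j, eLpNorm (ψ j) 2 (volume : Measure ℝ) = 1)
    (η : ℕ → ℝ → ℝ)
    (hη : ∀ j : ℕ, ∀ x : ℝ, η j x = ∑ k : Fin n,
      (1 / |f k|) * (h x / h ((f ⟨0, hn⟩ / f k) * x)) * ψ j ((f ⟨0, hn⟩ / f k) * x)) :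
    ∀ j : ℕ, ENNReal.ofReal (((n₁ : ℝ) / |f ⟨0, hn⟩|) * (1 - e)) ≤
      eLpNorm (η j) 2 (volume : Measure ℝ) :=
  stmt11_general hn f hf h hmeas hne s hs n₁ hn₁ e he_def ψ hψm hψ η hη
end
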